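/- Fix a real θ with 1 ≤ θ ≤ 2.13, and let 4.999 ≤ r_0 < r_1 ≤ 5. For j ∈ {0, 1}, let γ_j be the unique root in the interval (0, 0.56) of the cubic q_j(x) = 1 − (r_j − θ)x + (r_j − 2θ)x² + θx³. Then γ_1 < γ_0; consequently 1/(1 − γ_1) − θ < 1/(1 − γ_0) − θ, i.e., γ and 1/(1 − γ) − θ decrease strictly in r. -/

import Mathlib

/-!
For `0 < x < 1` the value `q r θ x` decreases strictly in `r`, since `∂q/∂r = x² - x < 0`;
hence `q r₁ θ γ₀ < q r₀ θ γ₀ = 0`. Also `q r₁ θ 0.56 < 0`, and on `[0, 0.56]` the cubic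
`q r₁ θ` lies below its chords, so it is negative on all of `[γ₀, 0.56)` and its root `γ₁`
must lie to the left of `γ₀`.
-/

/-- The cubic `q(x) = 1 - (r - θ)x + (r - 2θ)x² + θx³`. -/
def q (r θ x : ℝ) : ℝ :=
  1 - (r - θ) * x + (r - 2 * θ) * x ^ 2 + θ * x ^ 3

open Set

lemma q_strictAnti_of_mem_Ioo {θ x : ℝ} (hx : x ∈ Ioo (0 : ℝ) 1) :
    StrictAnti fun r => q r θ x := by
  intro r r' hr
  have hdiff : q r' θ x - q r θ x = (r' - r) * (x ^ 2 - x) := by unfold q; ring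
  have hslope : x ^ 2 - x < 0 := by nlinarith [hx.1, hx.2]
  nlinarith [mul_neg_of_pos_of_neg (sub_pos.mpr hr) hslope]

/-- `r - 2θ + θ(x + y + z)` is the second divided difference `q[x, y, z]`. -/
lemma q_chord (r θ x y z : ℝ) :
    (z - x) * q r θ y = (z - y) * q r θ x + (y - x) * q r θ z
      - (y - x) * (z - y) * (z - x) * (r - 2 * θ + θ * (x + y + z)) := by
  unfold q; ring

lemma q_neg_of_neg_of_neg {r θ x y z : ℝ} (hxy : x ≤ y) (hyz : y < z)
    (hconv : 0 < r - 2 * θ + θ * (x + y + z)) (hx : q r θ x < 0) (hz : q r θ z < 0) :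
    q r θ y < 0 := by
  have hzx : 0 < z - x := by linarith
  have hcubic : 0 ≤ (y - x) * (z - y) * (z - x) * (r - 2 * θ + θ * (x + y + z)) := by
    have := sub_nonneg.mpr hxy
    have := sub_pos.mpr hyz
    positivity
  have hchord : (z - x) * q r θ y < 0 := by
    rw [q_chord]
    nlinarith [mul_neg_of_pos_of_neg (sub_pos.mpr hyz) hx,
      mul_nonpos_of_nonneg_of_nonpos (sub_nonneg.mpr hxy) hz.le]
  exact neg_of_mul_neg_right hchord hzx.le

lemma second_divided_difference_q_pos {r θ s : ℝ} (hr : 4.999 ≤ r) (hθ : θ ≤ 2.13)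
    (hs₀ : 0 ≤ s) (hs₁ : s < 2) : 0 < r - 2 * θ + θ * s := by
  nlinarith [mul_nonneg (sub_nonneg.mpr hθ) (sub_pos.mpr hs₁).le]

lemma q_at_056_neg {r θ : ℝ} (hr : 4.999 ≤ r) (hθ : θ ≤ 2.13) : q r θ 0.56 < 0 := by
  unfold q; norm_num; linarith

lemma q_neg_of_root_le {θ r₀ r₁ γ₀ y : ℝ} (hθ : θ ≤ 2.13) (hr₀ : 4.999 ≤ r₀)
    (hr : r₀ < r₁) (hγ₀ : γ₀ ∈ Ioo (0 : ℝ) 0.56) (hroot : q r₀ θ γ₀ = 0)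
    (hy : y ∈ Ico γ₀ 0.56) : q r₁ θ y < 0 := by
  have hγ₀q : q r₁ θ γ₀ < 0 :=
    hroot ▸ q_strictAnti_of_mem_Ioo ⟨hγ₀.1, by linarith [hγ₀.2]⟩ hr
  refine q_neg_of_neg_of_neg hy.1 hy.2 ?_ hγ₀q (q_at_056_neg (by linarith) hθ)
  exact second_divided_difference_q_pos (by linarith) hθ
    (by linarith [hγ₀.1, hy.1]) (by linarith [hγ₀.2, hy.2])

theorem gamma_decreasing_general (θ r₀ r₁ γ₀ γ₁ : ℝ)
    (hθ2 : θ ≤ 2.13)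
    (hr0 : 4.999 ≤ r₀) (hr01 : r₀ < r₁)
    (hγ₀ : 0 < γ₀ ∧ γ₀ < 0.56 ∧ q r₀ θ γ₀ = 0)
    (hγ₁ : 0 < γ₁ ∧ γ₁ < 0.56 ∧ q r₁ θ γ₁ = 0) :
    γ₁ < γ₀ ∧ 1 / (1 - γ₁) - θ < 1 / (1 - γ₀) - θ := by
  obtain ⟨hγ₀pos, hγ₀lt, hγ₀root⟩ := hγ₀
  obtain ⟨hγ₁pos, hγ₁lt, hγ₁root⟩ := hγ₁
  have hlt : γ₁ < γ₀ := not_le.mp fun hle =>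
    (q_neg_of_root_le hθ2 hr0 hr01 ⟨hγ₀pos, hγ₀lt⟩ hγ₀root ⟨hle, hγ₁lt⟩).ne hγ₁root
  refine ⟨hlt, sub_lt_sub_right (one_div_lt_one_div_of_lt ?_ ?_) θ⟩ <;> linarith

/-- For fixed `1 ≤ θ ≤ 2.13` and `4.999 ≤ r₀ < r₁ ≤ 5`, the root `γ` of `q` in
`(0, 0.56)` decreases strictly in `r`, and so does `1/(1 - γ) - θ`. -/
theorem gamma_decreasing (θ r₀ r₁ γ₀ γ₁ : ℝ)
    (hθ1 : 1 ≤ θ) (hθ2 : θ ≤ 2.13)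
    (hr0 : 4.999 ≤ r₀) (hr01 : r₀ < r₁) (hr1 : r₁ ≤ 5)
    (hγ₀ : 0 < γ₀ ∧ γ₀ < 0.56 ∧ q r₀ θ γ₀ = 0)
    (hγ₁ : 0 < γ₁ ∧ γ₁ < 0.56 ∧ q r₁ θ γ₁ = 0) :
    γ₁ < γ₀ ∧ 1 / (1 - γ₁) - θ < 1 / (1 - γ₀) - θ :=
  gamma_decreasing_general θ r₀ r₁ γ₀ γ₁ hθ2 hr0 hr01 hγ₀ hγ₁
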